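/- Let n, m ≥ 1 and let K_{m,n} be the complete bipartite graph with parts of sizes m and n. For every vertex P of degree n (i.e., a vertex in the part of size m), the rank Weierstrass set of K_{m,n} at P is H_r(P) = nℕ ∪ ((m−1)n + ℕ) = { nk : k ∈ ℕ } ∪ { t ∈ ℕ : t ≥ (m−1)n }. -/

import Mathlib

open scoped Classical

/-- A graph: a finite connected multigraph with no loop edges, given by a symmetric
edge-multiplicity function on a finite nonempty vertex type. -/
structure Multigraph where
  V : Type
  [fintypeV : Fintype V]
  [decEqV : DecidableEq V]
  [nonemptyV : Nonempty V]
  adj : V → V → ℕ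
  adj_symm : ∀ u v, adj u v = adj v u
  adj_loopless : ∀ v, adj v v = 0
  conn : ∀ u v, Relation.ReflTransGen (fun a b => adj a b ≠ 0) u v

attribute [instance] Multigraph.fintypeV Multigraph.decEqV Multigraph.nonemptyV

namespace Multigraph

variable (G : Multigraph)

/-- A simple graph: no multiple edges and more than one vertex. -/
def Simple : Prop :=
  (∀ u v, G.adj u v ≤ 1) ∧ 1 < Fintype.card G.V

/-- The degree of a divisor. -/
def deg (D : G.V → ℤ) : ℤ := ∑ v, D v

/-- A divisor is effective if all its coefficients are nonnegative. -/
def Effective (D : G.V → ℤ) : Prop := ∀ v, 0 ≤ D v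

/-- The Laplacian of an integer-valued function on the vertices. -/
def lap (f : G.V → ℤ) : G.V → ℤ := fun v => ∑ w, (G.adj v w : ℤ) * (f v - f w)

/-- The linear system `|D|` is nonempty, i.e. `D` is linearly equivalent to an
effective divisor. -/
def LinNonempty (D : G.V → ℤ) : Prop :=
  ∃ f : G.V → ℤ, G.Effective (D - G.lap f)

/-- The Baker–Norine rank of a divisor: `-1` if `|D| = ∅`, otherwise the maximal
`k` such that `|D - E| ≠ ∅` for every effective divisor `E` of degree `k`. -/
noncomputable def rank (D : G.V → ℤ) : ℤ :=
  if G.LinNonempty D then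
    ((sSup {k : ℕ | ∀ E : G.V → ℤ, G.Effective E → G.deg E = (k : ℤ) →
        G.LinNonempty (D - E)} : ℕ) : ℤ)
  else -1

/-- The divisor `n • P`. -/
def pt (P : G.V) (n : ℤ) : G.V → ℤ := fun v => if v = P then n else 0

/-- The rank Weierstrass set of `G` at `P`. -/
def Hr (P : G.V) : Set ℕ :=
  {n : ℕ | G.rank (G.pt P ((n : ℤ) - 1)) < G.rank (G.pt P (n : ℤ))}

/-- The functional Weierstrass set of `G` at `P`: pole orders at `P` of functions
with a unique pole at `P`. -/
def Hf (P : G.V) : Set ℕ :=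
  {n : ℕ | ∃ f : G.V → ℤ, G.lap f P = -(n : ℤ) ∧ ∀ Q, Q ≠ P → 0 ≤ G.lap f Q}

/-- The number of edges joining `Q` to vertices outside `A`. -/
def outdeg (A : Finset G.V) (Q : G.V) : ℕ := ∑ R ∈ Aᶜ, G.adj Q R

/-- A divisor is `P`-reduced. -/
def Reduced (P : G.V) (D : G.V → ℤ) : Prop :=
  (∀ Q, Q ≠ P → 0 ≤ D Q) ∧
  ∀ A : Finset G.V, A.Nonempty → P ∉ A → ∃ Q ∈ A, D Q < (G.outdeg A Q : ℤ)

/-- `G` is the graph `B_n` with two vertices joined by `n` parallel edges. -/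
def IsBanana (n : ℕ) : Prop :=
  Fintype.card G.V = 2 ∧ ∀ u v, u ≠ v → G.adj u v = n

/-- `G` is the complete graph on `n` vertices. -/
def IsComplete (n : ℕ) : Prop :=
  Fintype.card G.V = n ∧ ∀ u v, u ≠ v → G.adj u v = 1

/-- `G` is the complete bipartite graph with parts `A` (of size `m`) and its
complement (of size `n`). -/
def IsCompleteBipartite (A : Finset G.V) (m n : ℕ) : Prop :=
  A.card = m ∧ Aᶜ.card = n ∧
  ∀ u v, G.adj u v = if (u ∈ A ∧ v ∉ A) ∨ (u ∉ A ∧ v ∈ A) then 1 else 0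

/-- `λ_Q(k)`: the least `n` with `r(nQ) = k`. -/
noncomputable def lam (Q : G.V) (k : ℕ) : ℕ :=
  sInf {n : ℕ | G.rank (G.pt Q (n : ℤ)) = (k : ℤ)}

end Multigraph

/-- `G` is the vertex gluing of `G₁` and `G₂` identifying `P₁` and `P₂` into `P`. -/
def IsVertexGluing (G G₁ G₂ : Multigraph) (P : G.V) (P₁ : G₁.V) (P₂ : G₂.V) : Prop :=
  ∃ (ι₁ : G₁.V → G.V) (ι₂ : G₂.V → G.V),
    Function.Injective ι₁ ∧ Function.Injective ι₂ ∧
    ι₁ P₁ = P ∧ ι₂ P₂ = P ∧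
    (∀ a b, ι₁ a = ι₂ b → ι₁ a = P) ∧
    (∀ v : G.V, (∃ a, ι₁ a = v) ∨ (∃ b, ι₂ b = v)) ∧
    (∀ a b, G.adj (ι₁ a) (ι₁ b) = G₁.adj a b) ∧
    (∀ a b, G.adj (ι₂ a) (ι₂ b) = G₂.adj a b) ∧
    (∀ a b, ι₁ a ≠ P → ι₂ b ≠ P → G.adj (ι₁ a) (ι₂ b) = 0)

/-!
Writing `g = (m - 1)(n - 1)` for the genus of `K_{m,n}`, the rank of `d • P` is
`max ⌊d / n⌋ (d - g)`, and the Weierstrass set is read off from this formula: `⌊d / n⌋` jumps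
exactly at the multiples of `n`, and `d - g` exceeds `⌊d / n⌋` exactly from `d = (m - 1) n` on.

Lower bounds: `n • P` is equivalent to `n • Q` for every `Q` on the side of `P` and to the sum of
the vertices of the other side, so `⌊d / n⌋` chips can always be removed; and a divisor of degree
at least `g` is equivalent to an effective one, because a `P`-reduced divisor carries at most `g`
chips away from `P`. Upper bounds: for explicit effective `E` of degree one more than the formula,
`d • P - E` is equivalent to a `P`-reduced divisor that is negative at `P`, and Dhar's burning
argument shows that such a divisor is not equivalent to any effective one.
-/

namespace Multigraph

open Finset

variable {G : Multigraph}

lemma lap_add (f g : G.V → ℤ) : G.lap (f + g) = G.lap f + G.lap g := by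
  funext v
  simp only [lap, Pi.add_apply, ← sum_add_distrib]
  exact sum_congr rfl fun w _ => by ring

lemma lap_smul (c : ℤ) (f : G.V → ℤ) : G.lap (c • f) = c • G.lap f := by
  funext v
  simp only [lap, Pi.smul_apply, smul_eq_mul, mul_sum]
  exact sum_congr rfl fun w _ => by ring

lemma lap_const (c : ℤ) : G.lap (fun _ => c) = 0 := by
  funext v
  simp [lap]

lemma lap_zero : G.lap 0 = 0 :=
  lap_const 0

lemma sum_lap_mul_comm (f h : G.V → ℤ) :
    ∑ v, G.lap f v * h v = ∑ v, f v * G.lap h v := by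
  simp only [lap, sum_mul, mul_sum, mul_sub, sub_mul, sum_sub_distrib]
  congr 1
  · exact sum_congr rfl fun v _ => sum_congr rfl fun w _ => by ring
  · rw [sum_comm]
    exact sum_congr rfl fun v _ => sum_congr rfl fun w _ => by rw [G.adj_symm]; ring

lemma deg_add (D E : G.V → ℤ) : G.deg (D + E) = G.deg D + G.deg E :=
  sum_add_distrib

lemma deg_sub (D E : G.V → ℤ) : G.deg (D - E) = G.deg D - G.deg E :=
  sum_sub_distrib ..

lemma deg_lap (f : G.V → ℤ) : G.deg (G.lap f) = 0 := by
  simpa [deg, lap_const] using sum_lap_mul_comm f (fun _ => 1)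

lemma deg_pt (P : G.V) (c : ℤ) : G.deg (G.pt P c) = c := by
  simp [deg, pt]

lemma effective_pt (P : G.V) {c : ℤ} (hc : 0 ≤ c) : G.Effective (G.pt P c) := by
  intro v
  unfold pt
  split_ifs <;> omega

lemma LinNonempty.mono {D D' : G.V → ℤ} (hD : G.LinNonempty D) (h : D ≤ D') :
    G.LinNonempty D' := by
  obtain ⟨f, hf⟩ := hD
  exact ⟨f, fun v => (hf v).trans (sub_le_sub_right (h v) _)⟩

lemma linNonempty_sub_lap_iff (D f : G.V → ℤ) :
    G.LinNonempty (D - G.lap f) ↔ G.LinNonempty D := by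
  constructor
  · rintro ⟨h, hh⟩
    exact ⟨f + h, by rwa [lap_add, ← sub_sub]⟩
  · rintro ⟨h, hh⟩
    refine ⟨h - f, ?_⟩
    rwa [sub_sub, ← lap_add, add_sub_cancel]

lemma LinNonempty.deg_nonneg {D : G.V → ℤ} (hD : G.LinNonempty D) : 0 ≤ G.deg D := by
  obtain ⟨f, hf⟩ := hD
  have : 0 ≤ G.deg (D - G.lap f) := sum_nonneg fun v _ => hf v
  rwa [deg_sub, deg_lap, sub_zero] at this

lemma linNonempty_of_effective {D : G.V → ℤ} (hD : G.Effective D) : G.LinNonempty D :=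
  ⟨0, by rwa [lap_zero, sub_zero]⟩

lemma le_rank {D : G.V → ℤ} {k : ℕ} (hD : G.LinNonempty D)
    (h : ∀ E, G.Effective E → G.deg E = k → G.LinNonempty (D - E)) : (k : ℤ) ≤ G.rank D := by
  obtain ⟨v₀⟩ := G.nonemptyV
  have hbdd : BddAbove {j : ℕ | ∀ E, G.Effective E → G.deg E = j → G.LinNonempty (D - E)} := by
    refine ⟨(G.deg D).toNat, fun j hj => ?_⟩
    have := (hj _ (effective_pt v₀ j.cast_nonneg) (deg_pt v₀ j)).deg_nonneg
    rw [deg_sub, deg_pt] at this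
    omega
  rw [rank, if_pos hD]
  exact_mod_cast le_csSup hbdd h

lemma rank_le {D E : G.V → ℤ} {k : ℕ} (hE : G.Effective E) (hdeg : G.deg E = k + 1)
    (h : ¬ G.LinNonempty (D - E)) : G.rank D ≤ k := by
  unfold rank
  split_ifs
  · suffices hk : ∀ j : ℕ, (∀ E, G.Effective E → G.deg E = j → G.LinNonempty (D - E)) → j ≤ k from
      Nat.cast_le.mpr (csSup_le' hk)
    intro j hj
    by_contra! hkj
    obtain ⟨v₀⟩ := G.nonemptyV
    have hfill := effective_pt v₀ (c := j - (k + 1)) (by omega)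
    refine h ((hj (E + G.pt v₀ (j - (k + 1))) (fun v => add_nonneg (hE v) (hfill v))
      (by rw [deg_add, deg_pt, hdeg]; ring)).mono fun v => ?_)
    have := hfill v
    simp only [Pi.sub_apply, Pi.add_apply]
    linarith
  · omega

lemma rank_eq_neg_one {D : G.V → ℤ} (h : G.deg D < 0) : G.rank D = -1 :=
  if_neg fun hD => (hD.deg_nonneg.trans_lt h).false

variable (G) in
def degree (v : G.V) : ℕ := ∑ w, G.adj v w

lemma adj_le_outdeg {S : Finset G.V} {u w : G.V} (hw : w ∉ S) : G.adj u w ≤ G.outdeg S u :=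
  single_le_sum (f := G.adj u) (fun _ _ => Nat.zero_le _) (mem_compl.mpr hw)

lemma lt_outdeg_of_lt_adj {S : Finset G.V} {u w : G.V} (hw : w ∉ S) {x : ℤ}
    (h : x < G.adj u w) : x < G.outdeg S u :=
  h.trans_le (by exact_mod_cast adj_le_outdeg hw)

lemma outdeg_anti {S T : Finset G.V} (h : S ⊆ T) (u : G.V) : G.outdeg T u ≤ G.outdeg S u :=
  sum_le_sum_of_subset (compl_subset_compl.mpr h)

lemma outdeg_le_lap {S : Finset G.V} {f : G.V → ℤ} {u : G.V} (hS : ∀ w ∉ S, f w < f u)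
    (hmax : ∀ w, f w ≤ f u) : (G.outdeg S u : ℤ) ≤ G.lap f u := by
  unfold outdeg lap
  push_cast
  calc ∑ w ∈ Sᶜ, (G.adj u w : ℤ) ≤ ∑ w ∈ Sᶜ, (G.adj u w : ℤ) * (f u - f w) :=
        sum_le_sum fun w hw => le_mul_of_one_le_right (by positivity)
          (by have := hS w (mem_compl.mp hw); omega)
    _ ≤ ∑ w, (G.adj u w : ℤ) * (f u - f w) :=
        sum_le_sum_of_subset_of_nonneg (subset_univ _) fun w _ _ =>
          mul_nonneg (by positivity) (by linarith [hmax w])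

theorem Reduced.not_linNonempty {P : G.V} {D : G.V → ℤ} (hD : G.Reduced P D) (hP : D P < 0) :
    ¬ G.LinNonempty D := by
  rintro ⟨f, hf⟩
  obtain ⟨u, -, hu⟩ := exists_max_image univ f univ_nonempty
  set S : Finset G.V := {w | f w = f u} with hS
  have hfire : ∀ v ∈ S, (G.outdeg S v : ℤ) ≤ G.lap f v := fun v hv => by
    simp only [hS, mem_filter, mem_univ, true_and] at hv
    refine outdeg_le_lap (fun w hw => ?_) (fun w => hv ▸ hu w (mem_univ w))
    simp only [hS, mem_filter, mem_univ, true_and] at hw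
    have := hu w (mem_univ w)
    omega
  by_cases hPS : P ∈ S
  · have := hf P
    have := hfire P hPS
    simp only [Pi.sub_apply] at *
    omega
  · obtain ⟨v, hv, hlt⟩ := hD.2 S ⟨u, by simp [hS]⟩ hPS
    have := hf v
    have := hfire v hv
    simp only [Pi.sub_apply] at *
    omega

lemma lap_indicator_of_mem {S : Finset G.V} {v : G.V} (hv : v ∈ S) :
    G.lap (fun w => if w ∈ S then 1 else 0) v = G.outdeg S v := by
  simp only [lap, outdeg, hv, if_true]
  push_cast
  rw [← sum_add_sum_compl S, sum_eq_zero fun w hw => by simp [hw], zero_add]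
  exact sum_congr rfl fun w hw => by simp [mem_compl.mp hw]

lemma lap_indicator_nonpos_of_notMem {S : Finset G.V} {v : G.V} (hv : v ∉ S) :
    G.lap (fun w => if w ∈ S then 1 else 0) v ≤ 0 :=
  sum_nonpos fun w _ => by
    simp only [hv, if_false]
    split_ifs <;> simp

/-- Repeatedly firing a set that violates reducedness terminates: each firing lowers the pairing
`∑ v, D v * w v` with the potential `w` by at least one. -/
lemma exists_reduced_of_nonneg {P : G.V} {w : G.V → ℤ} (hw : 0 ≤ w) (hwP : w P = 0)
    (hlap : ∀ v ≠ P, 1 ≤ G.lap w v) {D : G.V → ℤ} (hD : ∀ v ≠ P, 0 ≤ D v) :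
    ∃ f, G.Reduced P (D - G.lap f) := by
  have pairing_nonneg : ∀ D : G.V → ℤ, (∀ v ≠ P, 0 ≤ D v) → 0 ≤ ∑ v, D v * w v :=
    fun D hD => sum_nonneg fun v _ => by
      by_cases hv : v = P
      · simp [hv, hwP]
      · exact mul_nonneg (hD v hv) (hw v)
  induction hN : (∑ v, D v * w v).toNat using Nat.strong_induction_on generalizing D with
  | _ N ih =>
    by_cases hred : G.Reduced P D
    · exact ⟨0, by rwa [lap_zero, sub_zero]⟩
    obtain ⟨S, hSne, hPS, hS⟩ : ∃ S : Finset G.V, S.Nonempty ∧ P ∉ S ∧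
        ∀ u ∈ S, (G.outdeg S u : ℤ) ≤ D u := by
      by_contra! h
      exact hred ⟨hD, h⟩
    set g : G.V → ℤ := fun v => if v ∈ S then 1 else 0 with hg
    have hD' : ∀ v ≠ P, 0 ≤ (D - G.lap g) v := fun v hv => by
      rw [Pi.sub_apply, hg]
      by_cases hvS : v ∈ S
      · linarith [lap_indicator_of_mem (G := G) hvS, hS v hvS]
      · linarith [lap_indicator_nonpos_of_notMem (G := G) hvS, hD v hv]
    have hdrop : 1 ≤ ∑ v, G.lap g v * w v := by
      rw [sum_lap_mul_comm]
      obtain ⟨u, hu⟩ := hSne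
      calc (1 : ℤ) ≤ G.lap w u := hlap u fun h => hPS (h ▸ hu)
        _ ≤ ∑ v ∈ S, G.lap w v :=
            single_le_sum (fun v hv => zero_le_one.trans (hlap v fun h => hPS (h ▸ hv))) hu
        _ = ∑ v, g v * G.lap w v := by simp [g, ite_mul, sum_ite_mem]
    have hsplit : ∑ v, (D - G.lap g) v * w v = ∑ v, D v * w v - ∑ v, G.lap g v * w v := by
      simp only [Pi.sub_apply, sub_mul, sum_sub_distrib]
    obtain ⟨f, hf⟩ := ih _ (by have := pairing_nonneg _ hD'; omega) hD' rfl
    exact ⟨g + f, by rwa [lap_add, ← sub_sub]⟩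

theorem exists_reduced {P : G.V} {w : G.V → ℤ} (hw : 0 ≤ w) (hwP : w P = 0)
    (hlap : ∀ v ≠ P, 1 ≤ G.lap w v) (D : G.V → ℤ) : ∃ f, G.Reduced P (D - G.lap f) := by
  set c := ∑ v, |D v|
  have hD : ∀ v ≠ P, 0 ≤ (D - G.lap (-c • w)) v := fun v hv => by
    have h1 : |D v| ≤ c := single_le_sum (fun v _ => abs_nonneg (D v)) (mem_univ v)
    have h2 : c ≤ c * G.lap w v := le_mul_of_one_le_right ((abs_nonneg _).trans h1) (hlap v hv)
    simp only [lap_smul, Pi.sub_apply, Pi.smul_apply, smul_eq_mul]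
    linarith [neg_abs_le (D v)]
  obtain ⟨f, hf⟩ := exists_reduced_of_nonneg hw hwP hlap hD
  exact ⟨-c • w + f, by rwa [lap_add, ← sub_sub]⟩

lemma sum_degree_add_outdeg_erase {B : Finset G.V} {u : G.V} (hu : u ∈ B) :
    ∑ x ∈ B, (G.degree x + G.outdeg B x) =
      ∑ x ∈ B.erase u, (G.degree x + G.outdeg (B.erase u) x) + 2 * G.outdeg B u := by
  have hout : ∀ x, G.outdeg (B.erase u) x = G.outdeg B x + G.adj x u := fun x => by
    rw [outdeg, compl_erase, sum_insert (by simpa using hu), add_comm]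
    rfl
  have hdeg : G.degree u = ∑ w ∈ B.erase u, G.adj u w + G.outdeg B u := by
    rw [degree, outdeg, ← sum_add_sum_compl B, ← add_sum_erase B _ hu, G.adj_loopless, zero_add]
  have hsymm : ∑ x ∈ B.erase u, G.adj x u = ∑ w ∈ B.erase u, G.adj u w :=
    sum_congr rfl fun x _ => G.adj_symm x u
  simp only [hout, ← add_assoc, sum_add_distrib] at hsymm ⊢
  rw [← add_sum_erase B _ hu, ← add_sum_erase B _ hu, hsymm, hdeg]
  ring

/-- The right-hand side is twice the number of edges meeting `B`. -/
theorem Reduced.two_mul_sum_add_card_le {P : G.V} {D : G.V → ℤ} (hD : G.Reduced P D)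
    {B : Finset G.V} (hPB : P ∉ B) :
    2 * ∑ v ∈ B, D v + 2 * B.card ≤ ((∑ x ∈ B, (G.degree x + G.outdeg B x) : ℕ) : ℤ) := by
  induction B using Finset.strongInduction with
  | H B ih =>
    rcases B.eq_empty_or_nonempty with rfl | hB
    · simp
    obtain ⟨u, hu, hlt⟩ := hD.2 B hB hPB
    have hIH := ih (B.erase u) (erase_ssubset hu) fun h => hPB (mem_of_mem_erase h)
    rw [sum_degree_add_outdeg_erase hu, ← add_sum_erase B D hu, ← card_erase_add_one hu]
    push_cast at hIH ⊢
    linarith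

/-- A `P`-reduced divisor has at most `genus = #edges - #vertices + 1` chips away from `P`. -/
theorem Reduced.two_mul_sum_erase_le {P : G.V} {D : G.V → ℤ} (hD : G.Reduced P D) :
    2 * ∑ v ∈ univ.erase P, D v + 2 * ((Fintype.card G.V : ℤ) - 1) ≤ ∑ v, (G.degree v : ℤ) := by
  have h := hD.two_mul_sum_add_card_le (B := univ.erase P) (by simp)
  have hout : ∀ x, G.outdeg (univ.erase P) x = G.adj x P := fun x => by
    simp [outdeg, compl_erase]
  have hdegP : ∑ x, G.adj x P = G.degree P := sum_congr rfl fun x _ => G.adj_symm x P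
  have hsum : ∑ x ∈ univ.erase P, (G.degree x + G.outdeg (univ.erase P) x) = ∑ v, G.degree v := by
    have := sum_erase_add univ (fun x => G.degree x + G.adj x P) (mem_univ P)
    simp only [sum_add_distrib, hdegP, G.adj_loopless] at this
    simp only [hout, sum_add_distrib]
    omega
  rw [hsum, card_erase_of_mem (mem_univ P), card_univ,
    Nat.cast_sub Fintype.card_pos] at h
  push_cast at h
  exact h

def blockFun {V : Type} [DecidableEq V] (A : Finset V) (P : V) (a b c : ℤ) (v : V) : ℤ :=
  if v = P then a else if v ∈ A then b else c

namespace IsCompleteBipartite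

variable {A : Finset G.V} {m n : ℕ}

lemma adj_of_mem_of_notMem (hG : G.IsCompleteBipartite A m n) {u w : G.V} (hu : u ∈ A)
    (hw : w ∉ A) : G.adj u w = 1 := by
  simp [hG.2.2, hu, hw]

lemma adj_of_notMem_of_mem (hG : G.IsCompleteBipartite A m n) {u w : G.V} (hu : u ∉ A)
    (hw : w ∈ A) : G.adj u w = 1 := by
  simp [hG.2.2, hu, hw]

lemma sum_adj_mul_of_mem (hG : G.IsCompleteBipartite A m n) {v : G.V} (hv : v ∈ A)
    (h : G.V → ℤ) : ∑ w, (G.adj v w : ℤ) * h w = ∑ w ∈ Aᶜ, h w := by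
  rw [← sum_add_sum_compl A, sum_eq_zero fun w hw => by simp [hG.2.2, hv, hw], zero_add]
  exact sum_congr rfl fun w hw => by simp [hG.adj_of_mem_of_notMem hv (mem_compl.mp hw)]

lemma sum_adj_mul_of_notMem (hG : G.IsCompleteBipartite A m n) {v : G.V} (hv : v ∉ A)
    (h : G.V → ℤ) : ∑ w, (G.adj v w : ℤ) * h w = ∑ w ∈ A, h w := by
  rw [← sum_add_sum_compl A,
    sum_eq_zero (s := Aᶜ) fun w hw => by simp [hG.2.2, hv, mem_compl.mp hw], add_zero]
  exact sum_congr rfl fun w hw => by simp [hG.adj_of_notMem_of_mem hv hw]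

lemma lap_apply_of_mem (hG : G.IsCompleteBipartite A m n) {v : G.V} (hv : v ∈ A)
    (f : G.V → ℤ) : G.lap f v = n * f v - ∑ w ∈ Aᶜ, f w := by
  rw [lap]
  simp only [mul_sub, sum_sub_distrib, hG.sum_adj_mul_of_mem hv, sum_const, hG.2.1, nsmul_eq_mul]

lemma lap_apply_of_notMem (hG : G.IsCompleteBipartite A m n) {v : G.V} (hv : v ∉ A)
    (f : G.V → ℤ) : G.lap f v = m * f v - ∑ w ∈ A, f w := by
  rw [lap]
  simp only [mul_sub, sum_sub_distrib, hG.sum_adj_mul_of_notMem hv, sum_const, hG.1, nsmul_eq_mul]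

lemma outdeg_of_mem (hG : G.IsCompleteBipartite A m n) {u : G.V} (hu : u ∈ A) :
    G.outdeg A u = n := by
  rw [outdeg, sum_congr rfl fun w hw => hG.adj_of_mem_of_notMem hu (mem_compl.mp hw)]
  simp [hG.2.1]

lemma outdeg_compl_of_notMem (hG : G.IsCompleteBipartite A m n) {u : G.V} (hu : u ∉ A) :
    G.outdeg Aᶜ u = m := by
  rw [outdeg, compl_compl, sum_congr rfl fun w hw => hG.adj_of_notMem_of_mem hu hw]
  simp [hG.1]

lemma card_eq (hG : G.IsCompleteBipartite A m n) : Fintype.card G.V = m + n := by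
  rw [← hG.1, ← hG.2.1, card_add_card_compl]

lemma sum_degree (hG : G.IsCompleteBipartite A m n) : ∑ v, (G.degree v : ℤ) = 2 * m * n := by
  have hdeg : ∀ v, (G.degree v : ℤ) = ∑ w, (G.adj v w : ℤ) * 1 := by simp [degree]
  rw [← sum_add_sum_compl A,
    sum_congr rfl fun v hv => (hdeg v).trans (hG.sum_adj_mul_of_mem hv _),
    sum_congr rfl fun v hv => (hdeg v).trans (hG.sum_adj_mul_of_notMem (mem_compl.mp hv) _)]
  simp [hG.1, hG.2.1]
  ring

variable {P : G.V}

lemma sum_compl_blockFun (hG : G.IsCompleteBipartite A m n) (hP : P ∈ A) (a b c : ℤ) :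
    ∑ w ∈ Aᶜ, blockFun A P a b c w = n * c := by
  rw [sum_congr rfl fun w hw => by
    rw [blockFun, if_neg (ne_of_mem_of_not_mem hP (mem_compl.mp hw)).symm,
      if_neg (mem_compl.mp hw)]]
  simp [hG.2.1]

lemma sum_blockFun (hG : G.IsCompleteBipartite A m n) (hP : P ∈ A) (a b c : ℤ) :
    ∑ w ∈ A, blockFun A P a b c w = a + (m - 1) * b := by
  rw [← add_sum_erase A _ hP, sum_congr rfl fun w hw => by
    rw [blockFun, if_neg (ne_of_mem_erase hw), if_pos (mem_of_mem_erase hw)]]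
  simp [blockFun, card_erase_of_mem hP, hG.1, Nat.cast_sub (hG.1 ▸ card_pos.mpr ⟨P, hP⟩)]

lemma deg_blockFun (hG : G.IsCompleteBipartite A m n) (hP : P ∈ A) (a b c : ℤ) :
    G.deg (blockFun A P a b c) = a + (m - 1) * b + n * c := by
  rw [deg, ← sum_add_sum_compl A, hG.sum_blockFun hP, hG.sum_compl_blockFun hP]

lemma lap_blockFun_self (hG : G.IsCompleteBipartite A m n) (hP : P ∈ A) (a b c : ℤ) :
    G.lap (blockFun A P a b c) P = n * (a - c) := by
  rw [hG.lap_apply_of_mem hP, hG.sum_compl_blockFun hP, blockFun, if_pos rfl]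
  ring

lemma lap_blockFun_of_mem (hG : G.IsCompleteBipartite A m n) (hP : P ∈ A) (a b c : ℤ)
    {v : G.V} (hv : v ∈ A) (hvP : v ≠ P) : G.lap (blockFun A P a b c) v = n * (b - c) := by
  rw [hG.lap_apply_of_mem hv, hG.sum_compl_blockFun hP, blockFun, if_neg hvP, if_pos hv]
  ring

lemma lap_blockFun_of_notMem (hG : G.IsCompleteBipartite A m n) (hP : P ∈ A) (a b c : ℤ)
    {v : G.V} (hv : v ∉ A) : G.lap (blockFun A P a b c) v = m * c - a - (m - 1) * b := by
  rw [hG.lap_apply_of_notMem hv, hG.sum_blockFun hP, blockFun,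
    if_neg (ne_of_mem_of_not_mem hP hv).symm, if_neg hv]
  ring

theorem exists_reduced (hG : G.IsCompleteBipartite A m n) (hn : 1 ≤ n) (hP : P ∈ A)
    (D : G.V → ℤ) : ∃ f, G.Reduced P (D - G.lap f) := by
  refine Multigraph.exists_reduced (w := blockFun A P 0 (m + 1) m) (fun v => ?_)
    (by simp [blockFun]) (fun v hv => ?_) D
  · simp only [blockFun, Pi.zero_apply]
    split_ifs <;> positivity
  · by_cases hvA : v ∈ A
    · rw [hG.lap_blockFun_of_mem hP _ _ _ hvA hv]
      linarith
    · rw [hG.lap_blockFun_of_notMem hP _ _ _ hvA]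
      linarith [show ((m : ℤ) - 1) * (m + 1) = m * m - 1 by ring]

/-- `(m - 1) * (n - 1)` is the genus of `K_{m,n}`. -/
theorem linNonempty_of_le_deg (hG : G.IsCompleteBipartite A m n) (hm : 1 ≤ m) (hn : 1 ≤ n)
    {D : G.V → ℤ} (hD : ((m : ℤ) - 1) * (n - 1) ≤ G.deg D) : G.LinNonempty D := by
  obtain ⟨P, hP⟩ := card_pos.mp (hG.1 ▸ hm)
  obtain ⟨f, hf⟩ := hG.exists_reduced hn hP D
  have hbound := hf.two_mul_sum_erase_le
  rw [hG.sum_degree, hG.card_eq] at hbound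
  have hsplit := add_sum_erase univ (D - G.lap f) (mem_univ P)
  rw [← deg, deg_sub, deg_lap, sub_zero] at hsplit
  refine ⟨f, fun v => ?_⟩
  by_cases hv : v = P
  · subst hv
    push_cast at hbound
    nlinarith
  · exact hf.1 v hv

/-- `n • P ∼ n • Q` for `Q ∈ A`, and `n • P` is equivalent to the sum of the vertices outside `A`;
so `(n * deg E) • P` dominates `E` up to equivalence. -/
theorem linNonempty_pt_sub_of_mul_deg_le (hG : G.IsCompleteBipartite A m n) (hn : 1 ≤ n)
    (hP : P ∈ A) {d : ℤ} {E : G.V → ℤ} (hE : G.Effective E) (h : n * G.deg E ≤ d) :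
    G.LinNonempty (G.pt P d - E) := by
  set f : G.V → ℤ := G.pt P (G.deg E) - fun v => if v ∈ A then E v else 0 with hf
  have hfc : ∑ w ∈ Aᶜ, f w = 0 :=
    sum_eq_zero fun w hw => by
      simp [hf, pt, mem_compl.mp hw, (ne_of_mem_of_not_mem hP (mem_compl.mp hw)).symm]
  have hfA : ∑ w ∈ A, f w = ∑ w ∈ Aᶜ, E w := by
    have := sum_add_sum_compl A E
    simp only [hf, Pi.sub_apply, sum_sub_distrib, pt, sum_ite_eq', hP, if_true]
    rw [sum_congr rfl fun w hw => if_pos hw, deg]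
    linarith
  have hn' : (1 : ℤ) ≤ n := by exact_mod_cast hn
  refine ⟨f, fun v => ?_⟩
  simp only [Pi.sub_apply]
  by_cases hvA : v ∈ A
  · rw [hG.lap_apply_of_mem hvA, hfc]
    by_cases hvP : v = P
    · subst hvP
      simp only [hf, pt, Pi.sub_apply, if_true, hvA]
      nlinarith [hE v]
    · simp only [hf, pt, Pi.sub_apply, hvP, hvA, if_true, if_false]
      nlinarith [hE v]
  · rw [hG.lap_apply_of_notMem hvA, hfA, hf]
    simp only [pt, Pi.sub_apply, (ne_of_mem_of_not_mem hP hvA).symm, hvA, if_false]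
    linarith [single_le_sum (fun w _ => hE w) (mem_compl.mpr hvA)]

/-- Firing `P` `c` times turns `d • P - c • b` into a `P`-reduced divisor, negative at `P`. -/
theorem not_linNonempty_pt_sub_pt (hG : G.IsCompleteBipartite A m n) (hP : P ∈ A) {b : G.V}
    (hb : b ∉ A) {c d : ℤ} (hc : 0 ≤ c) (hcm : c < m) (hd : d < n * c) :
    ¬ G.LinNonempty (G.pt P d - G.pt b c) := by
  set D := G.pt P d - G.pt b c - G.lap (blockFun A P c 0 0) with hD
  have hPb : P ≠ b := ne_of_mem_of_not_mem hP hb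
  have hDP : D P = d - n * c := by
    simp [hD, pt, hPb, hG.lap_blockFun_self hP]
  have hDA : ∀ v ∈ A, v ≠ P → D v = 0 := fun v hv hvP => by
    simp [hD, pt, hvP, ne_of_mem_of_not_mem hv hb, hG.lap_blockFun_of_mem hP _ _ _ hv hvP]
  have hDb : D b = 0 := by
    simp [hD, pt, hPb.symm, hG.lap_blockFun_of_notMem hP _ _ _ hb]
  have hDc : ∀ v ∉ A, v ≠ b → D v = c := fun v hv hvb => by
    simp [hD, pt, hvb, (ne_of_mem_of_not_mem hP hv).symm, hG.lap_blockFun_of_notMem hP _ _ _ hv]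
  rw [← linNonempty_sub_lap_iff _ (blockFun A P c 0 0), ← hD]
  refine Reduced.not_linNonempty (P := P) ⟨fun v hvP => ?_, fun S hS hPS => ?_⟩
    (by rw [hDP]; linarith)
  · by_cases hvA : v ∈ A
    · rw [hDA v hvA hvP]
    by_cases hvb : v = b
    · rw [hvb, hDb]
    · rw [hDc v hvA hvb]
      exact hc
  by_cases hbS : b ∈ S
  · exact ⟨b, hbS, lt_outdeg_of_lt_adj hPS (by simp [hDb, hG.adj_of_notMem_of_mem hb hP])⟩
  by_cases hSA : ∃ a ∈ S, a ∈ A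
  · obtain ⟨a, haS, haA⟩ := hSA
    exact ⟨a, haS, lt_outdeg_of_lt_adj hbS
      (by simp [hDA a haA fun h => hPS (h ▸ haS), hG.adj_of_mem_of_notMem haA hb])⟩
  · simp only [not_exists, not_and] at hSA
    obtain ⟨u, hu⟩ := hS
    refine ⟨u, hu, ?_⟩
    have := outdeg_anti (G := G) (fun w hw => mem_compl.mpr (hSA w hw)) u
    rw [hG.outdeg_compl_of_notMem (hSA u hu)] at this
    rw [hDc u (hSA u hu) fun h => hbS (h ▸ hu)]
    exact hcm.trans_le (by exact_mod_cast this)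

/-- Subtracting `Δ (blockFun A P (m - 1) (-1) 0)` leaves a `P`-reduced divisor with `n - 1` chips
on `A \ {P}`, none on `Aᶜ`, and a negative coefficient at `P`. -/
theorem not_linNonempty_pt_sub_blockFun (hG : G.IsCompleteBipartite A m n) (hn : 1 ≤ n)
    (hP : P ∈ A) {a d : ℤ} (hd : d < a + n * (m - 1)) :
    ¬ G.LinNonempty (G.pt P d - blockFun A P a 1 0) := by
  set D := G.pt P d - blockFun A P a 1 0 - G.lap (blockFun A P (m - 1) (-1) 0) with hD
  have hDP : D P = d - a - n * (m - 1) := by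
    simp [hD, pt, blockFun, hG.lap_blockFun_self hP]
  have hDA : ∀ v ∈ A, v ≠ P → D v = n - 1 := fun v hv hvP => by
    simp [hD, pt, blockFun, hvP, hv, hG.lap_blockFun_of_mem hP _ _ _ hv hvP]
    ring
  have hDc : ∀ v ∉ A, D v = 0 := fun v hv => by
    simp [hD, pt, blockFun, hv, (ne_of_mem_of_not_mem hP hv).symm,
      hG.lap_blockFun_of_notMem hP _ _ _ hv]
  rw [← linNonempty_sub_lap_iff _ (blockFun A P (m - 1) (-1) 0), ← hD]
  refine Reduced.not_linNonempty (P := P) ⟨fun v hvP => ?_, fun S hS hPS => ?_⟩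
    (by rw [hDP]; linarith)
  · by_cases hvA : v ∈ A
    · rw [hDA v hvA hvP]
      omega
    · rw [hDc v hvA]
  by_cases hSA : ∃ u ∈ S, u ∉ A
  · obtain ⟨u, huS, huA⟩ := hSA
    exact ⟨u, huS, lt_outdeg_of_lt_adj hPS (by simp [hDc u huA, hG.adj_of_notMem_of_mem huA hP])⟩
  · simp only [not_exists, not_and, not_not] at hSA
    obtain ⟨u, hu⟩ := hS
    refine ⟨u, hu, ?_⟩
    have := outdeg_anti (G := G) (fun w hw => hSA w hw) u
    rw [hG.outdeg_of_mem (hSA u hu)] at this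
    rw [hDA u (hSA u hu) fun h => hPS (h ▸ hu)]
    linarith [show (n : ℤ) ≤ G.outdeg S u by exact_mod_cast this]

theorem exists_effective_not_linNonempty (hG : G.IsCompleteBipartite A m n) (hn : 1 ≤ n)
    (hP : P ∈ A) {d : ℤ} {k : ℕ} (hdiv : d / n ≤ k) (hgenus : d - (m - 1) * (n - 1) ≤ k) :
    ∃ E, G.Effective E ∧ G.deg E = k + 1 ∧ ¬ G.LinNonempty (G.pt P d - E) := by
  by_cases hkm : k + 1 < m
  · obtain ⟨b, hb⟩ := card_pos.mp (hG.2.1 ▸ hn)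
    have hd := Int.lt_ediv_add_one_mul_self d (b := n) (by omega)
    refine ⟨G.pt b (k + 1), effective_pt b (by omega), deg_pt b _,
      hG.not_linNonempty_pt_sub_pt hP (mem_compl.mp hb) (by omega) (by exact_mod_cast hkm) ?_⟩
    nlinarith
  · refine ⟨blockFun A P (k + 1 - (m - 1)) 1 0, fun v => ?_, ?_,
      hG.not_linNonempty_pt_sub_blockFun hn hP (by nlinarith)⟩
    · unfold blockFun
      split_ifs <;> omega
    · rw [hG.deg_blockFun hP]
      ring

/-- `/` is floor division (`Int.ediv` by `n > 0`), so the formula also covers `d = -1`. -/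
theorem rank_pt (hG : G.IsCompleteBipartite A m n) (hm : 1 ≤ m) (hn : 1 ≤ n) (hP : P ∈ A)
    {d : ℤ} (hd : -1 ≤ d) : G.rank (G.pt P d) = max (d / n) (d - (m - 1) * (n - 1)) := by
  have hn' : (0 : ℤ) < n := by exact_mod_cast hn
  rcases hd.eq_or_lt with rfl | hd
  · rw [rank_eq_neg_one (by rw [deg_pt]; norm_num), Int.neg_one_ediv, Int.sign_eq_one_of_pos hn']
    have : (0 : ℤ) ≤ (m - 1) * (n - 1) := mul_nonneg (by omega) (by omega)
    omega
  obtain ⟨k, hk⟩ : ∃ k : ℕ, (k : ℤ) = max (d / n) (d - (m - 1) * (n - 1)) :=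
    ⟨_, Int.toNat_of_nonneg ((Int.ediv_nonneg (by omega) hn'.le).trans (le_max_left _ _))⟩
  rw [← hk]
  apply le_antisymm
  · obtain ⟨E, hE, hdeg, hE'⟩ := hG.exists_effective_not_linNonempty hn hP
      (hk ▸ le_max_left _ _) (hk ▸ le_max_right _ _)
    exact rank_le hE hdeg hE'
  refine le_rank (linNonempty_of_effective (effective_pt P (by omega))) fun E hE hdeg => ?_
  rcases max_choice (d / n) (d - (m - 1) * (n - 1)) with h | h <;> rw [h] at hk
  · refine hG.linNonempty_pt_sub_of_mul_deg_le hn hP hE ?_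
    rw [hdeg, hk]
    exact Int.mul_ediv_self_le hn'.ne'
  · refine hG.linNonempty_of_le_deg hm hn ?_
    rw [deg_sub, deg_pt, hdeg, hk, sub_sub_cancel]

end IsCompleteBipartite

end Multigraph

lemma max_ediv_sub_one_lt_iff {n : ℤ} (hn : 0 < n) (a x : ℤ) :
    max ((x - 1) / n) (x - 1 - a * (n - 1)) < max (x / n) (x - a * (n - 1)) ↔
      n ∣ x ∨ a * n ≤ x := by
  obtain ⟨q, s, hs0, hsn, rfl⟩ : ∃ q s, 0 ≤ s ∧ s < n ∧ x = n * q + s :=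
    ⟨x / n, x % n, Int.emod_nonneg x hn.ne', Int.emod_lt_of_pos x hn,
      (Int.mul_ediv_add_emod x n).symm⟩
  have hx : (n * q + s) / n = q := ((Int.ediv_emod_unique hn).mpr ⟨by ring, hs0, hsn⟩).1
  rcases hs0.eq_or_lt with rfl | hs
  · have hx' : (n * q + 0 - 1) / n = q - 1 :=
      ((Int.ediv_emod_unique (r := n - 1) hn).mpr ⟨by ring, by omega, by omega⟩).1
    rw [hx, hx']
    simp only [add_zero, dvd_mul_right, true_or, iff_true]
    omega
  have hx' : (n * q + s - 1) / n = q :=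
    ((Int.ediv_emod_unique (r := s - 1) hn).mpr ⟨by ring, by omega, by omega⟩).1
  have hndvd : ¬ n ∣ n * q + s := fun h => hs.ne' <|
    Int.eq_zero_of_dvd_of_nonneg_of_lt hs0 hsn ((Int.dvd_add_right (dvd_mul_right n q)).mp h)
  rw [hx, hx', or_iff_right hndvd,
    show max q (n * q + s - 1 - a * (n - 1)) < max q (n * q + s - a * (n - 1)) ↔
      q < n * q + s - a * (n - 1) by omega]
  rcases le_or_gt a q with haq | haq
  · have h1 : a * n ≤ q * n := mul_le_mul_of_nonneg_right haq hn.le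
    have h2 : a * (n - 1) ≤ q * (n - 1) := mul_le_mul_of_nonneg_right haq (by omega)
    constructor <;> intro <;> linarith
  · have h1 : (q + 1) * n ≤ a * n := mul_le_mul_of_nonneg_right haq hn.le
    have h2 : (q + 1) * (n - 1) ≤ a * (n - 1) := mul_le_mul_of_nonneg_right haq (by omega)
    constructor <;> intro <;> linarith

/-- The rank Weierstrass set of `K_{m,n}` at a vertex of degree `n` is
`nℕ ∪ ((m-1)n + ℕ)`. -/
theorem Hr_completeBipartite (m n : ℕ) (hm : 1 ≤ m) (hn : 1 ≤ n) (G : Multigraph)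
    (A : Finset G.V) (hG : G.IsCompleteBipartite A m n) (P : G.V) (hP : P ∈ A) :
    G.Hr P = {x : ℕ | (∃ k : ℕ, x = n * k) ∨ (m - 1) * n ≤ x} := by
  ext x
  have hdvd : (n : ℤ) ∣ x ↔ ∃ k, x = n * k := Int.natCast_dvd_natCast
  have hle : ((m : ℤ) - 1) * n ≤ x ↔ (m - 1) * n ≤ x := by
    rw [← Nat.cast_one, ← Nat.cast_sub hm]
    exact_mod_cast Iff.rfl
  change G.rank _ < G.rank _ ↔ _
  rw [hG.rank_pt hm hn hP (by omega), hG.rank_pt hm hn hP (by omega),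
    max_ediv_sub_one_lt_iff (by omega), hdvd, hle]
  rfl
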